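/- arXiv:2209.09754 — 2 statements merged into one kernel-verified Lean document; each statement's English description precedes it below -/
import Mathlib

section
/- Let M∈ℕ with M≥1, Δ>0, τ=MΔ, ε>0, and constants c₁>c₂>0, c₃>0, c₄≥0 such that c₃ ≥ c₄e^{ετ} and 1+2c₁Δ ≥ e^{εΔ} + 2c₂Δe^{ετ}. Let (a_n)_{n≥−M} and (b_n)_{n≥−M} be sequences of nonnegative reals and (F_n)_{n≥0} a sequence of nonnegative reals with a_n ≤ F_n for all n≥0, and suppose that for all n≥1: (1+2c₁Δ)F_n ≤ F_{n−1} + 2c₂Δ·a_{n−M} − 2c₃Δ·b_n + 2c₄Δ·b_{n−M}. Then for all n ≥ 0, e^{εnΔ}·a_n ≤ Υ, where Υ := e^{εΔ}F_0 + 2c₂Δe^{ετ}·Σ_{i=−M+1}^{0} e^{εiΔ}a_i + 2c₄Δe^{ετ}·Σ_{i=−M+1}^{0} e^{εiΔ}b_i. -/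
lemma bem_sum_shift (f : ℤ → ℝ) (l r l' r' : ℤ) (hl : l' = l + 1) (hr : r' = r + 1)
    (h : l ≤ r) :
    ∑ i ∈ Finset.Icc l' r', f i = (∑ i ∈ Finset.Icc l r, f i) + f r' - f l := by
  subst hl hr
  have h1 : Finset.Icc l (r+1) = insert (r+1) (Finset.Icc l r) := by
    ext x; simp only [Finset.mem_Icc, Finset.mem_insert]; omega
  have h2 : Finset.Icc l (r+1) = insert l (Finset.Icc (l+1) (r+1)) := by
    ext x; simp only [Finset.mem_Icc, Finset.mem_insert]; omega
  have e1 : ∑ i ∈ Finset.Icc l (r+1), f i = f (r+1) + ∑ i ∈ Finset.Icc l r, f i := by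
    rw [h1, Finset.sum_insert (by simp)]
  have e2 : ∑ i ∈ Finset.Icc l (r+1), f i = f l + ∑ i ∈ Finset.Icc (l+1) (r+1), f i := by
    rw [h2, Finset.sum_insert (by simp)]
  linarith

set_option maxHeartbeats 1000000 in
/-- The deterministic sequence estimate extracted from the proof of Theorem 5.2: the
per-step energy inequality propagates to the uniform bound `e^{εnΔ}·a_n ≤ Υ`. -/
theorem bem_stability_sequence_estimate
    (M : ℕ) (hM : 1 ≤ M) (Δ τ ε : ℝ) (hΔ : 0 < Δ) (hτ : τ = M * Δ) (hε : 0 < ε)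
    (c₁ c₂ c₃ c₄ : ℝ) (hc₁₂ : c₂ < c₁) (hc₂ : 0 < c₂) (hc₃ : 0 < c₃) (hc₄ : 0 ≤ c₄)
    (hc₃₄ : c₄ * Real.exp (ε * τ) ≤ c₃)
    (hstep : Real.exp (ε * Δ) + 2 * c₂ * Δ * Real.exp (ε * τ) ≤ 1 + 2 * c₁ * Δ)
    (a b : ℤ → ℝ) (ha : ∀ n : ℤ, 0 ≤ a n) (hb : ∀ n : ℤ, 0 ≤ b n)
    (F : ℕ → ℝ) (hF : ∀ n : ℕ, 0 ≤ F n)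
    (haF : ∀ n : ℕ, a n ≤ F n)
    (hrec : ∀ n : ℕ, 1 ≤ n →
      (1 + 2 * c₁ * Δ) * F n
        ≤ F (n - 1) + 2 * c₂ * Δ * a ((n : ℤ) - M)
          - 2 * c₃ * Δ * b (n : ℤ) + 2 * c₄ * Δ * b ((n : ℤ) - M)) :
    ∀ n : ℕ, Real.exp (ε * n * Δ) * a n
      ≤ Real.exp (ε * Δ) * F 0
        + 2 * c₂ * Δ * Real.exp (ε * τ)
          * ∑ i ∈ Finset.Icc (-(M : ℤ) + 1) 0, Real.exp (ε * i * Δ) * a i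
        + 2 * c₄ * Δ * Real.exp (ε * τ)
          * ∑ i ∈ Finset.Icc (-(M : ℤ) + 1) 0, Real.exp (ε * i * Δ) * b i := by
  set eΔ := Real.exp (ε * Δ) with heΔ
  set eτ := Real.exp (ε * τ) with heτ
  set fa : ℤ → ℝ := fun i => Real.exp (ε * i * Δ) * a i with hfa
  set fb : ℤ → ℝ := fun i => Real.exp (ε * i * Δ) * b i with hfb
  set V : ℕ → ℝ := fun k =>
      eΔ * Real.exp (ε * k * Δ) * F k
      + 2 * c₂ * Δ * eτ * ∑ i ∈ Finset.Icc ((k : ℤ) - M + 1) (k : ℤ), fa i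
      + 2 * c₄ * Δ * eτ * ∑ i ∈ Finset.Icc ((k : ℤ) - M + 1) (k : ℤ), fb i with hV
  have heΔ1 : (1:ℝ) ≤ eΔ := by
    rw [heΔ]; exact Real.one_le_exp (by positivity)
  have heτ0 : (0:ℝ) < eτ := Real.exp_pos _
  have hfa0 : ∀ i : ℤ, 0 ≤ fa i := fun i => mul_nonneg (Real.exp_pos _).le (ha i)
  have hfb0 : ∀ i : ℤ, 0 ≤ fb i := fun i => mul_nonneg (Real.exp_pos _).le (hb i)
  have hC2 : (0:ℝ) ≤ 2 * c₂ * Δ * eτ :=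
    mul_nonneg (mul_nonneg (by linarith) hΔ.le) heτ0.le
  have hC4 : (0:ℝ) ≤ 2 * c₄ * Δ * eτ :=
    mul_nonneg (mul_nonneg (by linarith) hΔ.le) heτ0.le
  -- step inequality
  have hVstep : ∀ k : ℕ, V (k + 1) ≤ V k := by
    intro k
    have hrec_k := hrec (k + 1) (by omega)
    simp only [Nat.add_sub_cancel] at hrec_k
    have cast1 : ((k + 1 : ℕ) : ℤ) = (k : ℤ) + 1 := by push_cast; ring
    rw [cast1] at hrec_k
    set Ek : ℝ := Real.exp (ε * (k : ℝ) * Δ) with hEk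
    set E1 : ℝ := Real.exp (ε * ((k : ℝ) + 1) * Δ) with hE1
    set EM : ℝ := Real.exp (ε * ((k : ℝ) + 1 - (M : ℝ)) * Δ) with hEM
    have idA : E1 = eΔ * Ek := by
      rw [hE1, heΔ, hEk, ← Real.exp_add]; ring_nf
    have idB : E1 = eτ * EM := by
      rw [hE1, heτ, hEM, hτ, ← Real.exp_add]; ring_nf
    have hE1pos : (0:ℝ) < E1 := Real.exp_pos _
    have vfa1 : fa ((k : ℤ) + 1) = E1 * a ((k : ℤ) + 1) := by
      rw [hfa, hE1]; push_cast; ring_nf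
    have vfaM : fa ((k : ℤ) + 1 - M) = EM * a ((k : ℤ) + 1 - M) := by
      rw [hfa, hEM]; push_cast; ring_nf
    have vfb1 : fb ((k : ℤ) + 1) = E1 * b ((k : ℤ) + 1) := by
      rw [hfb, hE1]; push_cast; ring_nf
    have vfbM : fb ((k : ℤ) + 1 - M) = EM * b ((k : ℤ) + 1 - M) := by
      rw [hfb, hEM]; push_cast; ring_nf
    have haF1 : a ((k : ℤ) + 1) ≤ F (k + 1) := by
      have := haF (k + 1); rwa [cast1] at this
    have key : eΔ * E1 * F (k + 1) + 2 * c₂ * Δ * eτ * fa ((k : ℤ) + 1)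
          + 2 * c₄ * Δ * eτ * fb ((k : ℤ) + 1)
        ≤ eΔ * Ek * F k + 2 * c₂ * Δ * eτ * fa ((k : ℤ) + 1 - M)
          + 2 * c₄ * Δ * eτ * fb ((k : ℤ) + 1 - M) := by
      rw [vfa1, vfaM, vfb1, vfbM]
      have m1 : E1 * ((1 + 2 * c₁ * Δ) * F (k + 1))
          ≤ E1 * (F k + 2 * c₂ * Δ * a ((k : ℤ) + 1 - M)
              - 2 * c₃ * Δ * b ((k : ℤ) + 1) + 2 * c₄ * Δ * b ((k : ℤ) + 1 - M)) :=
        mul_le_mul_of_nonneg_left hrec_k hE1pos.le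
      have m3 : E1 * ((eΔ + 2 * c₂ * Δ * eτ) * F (k + 1))
          ≤ E1 * ((1 + 2 * c₁ * Δ) * F (k + 1)) :=
        mul_le_mul_of_nonneg_left
          (mul_le_mul_of_nonneg_right hstep (hF (k + 1))) hE1pos.le
      have m4 : 2 * c₂ * Δ * eτ * (E1 * a ((k : ℤ) + 1))
          ≤ 2 * c₂ * Δ * eτ * (E1 * F (k + 1)) :=
        mul_le_mul_of_nonneg_left (mul_le_mul_of_nonneg_left haF1 hE1pos.le) hC2
      have m5 : 2 * c₄ * Δ * eτ * (E1 * b ((k : ℤ) + 1))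
          ≤ 2 * c₃ * Δ * (E1 * b ((k : ℤ) + 1)) := by
        have hbb : (0:ℝ) ≤ E1 * b ((k : ℤ) + 1) := mul_nonneg hE1pos.le (hb _)
        nlinarith [mul_le_mul_of_nonneg_right
          (mul_le_mul_of_nonneg_right hc₃₄ hΔ.le) hbb]
      have q1 : E1 * F k = eΔ * Ek * F k := by rw [idA]
      have q2 : 2 * c₂ * Δ * (E1 * a ((k : ℤ) + 1 - M))
          = 2 * c₂ * Δ * eτ * (EM * a ((k : ℤ) + 1 - M)) := by rw [idB]; ring
      have q3 : 2 * c₄ * Δ * (E1 * b ((k : ℤ) + 1 - M))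
          = 2 * c₄ * Δ * eτ * (EM * b ((k : ℤ) + 1 - M)) := by rw [idB]; ring
      linarith [m1, m3, m4, m5, q1, q2, q3]
    have shSa := bem_sum_shift fa ((k : ℤ) - M + 1) (k : ℤ)
        ((k : ℤ) + 1 - M + 1) ((k : ℤ) + 1) (by ring) (by ring) (by omega)
    have shSb := bem_sum_shift fb ((k : ℤ) - M + 1) (k : ℤ)
        ((k : ℤ) + 1 - M + 1) ((k : ℤ) + 1) (by ring) (by ring) (by omega)
    rw [hV]
    simp only
    push_cast
    rw [← hE1, ← hEk, shSa, shSb]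
    have idx : fa ((k : ℤ) - M + 1) = fa ((k : ℤ) + 1 - M) := congrArg fa (by ring)
    have idx2 : fb ((k : ℤ) - M + 1) = fb ((k : ℤ) + 1 - M) := congrArg fb (by ring)
    rw [idx, idx2]
    linarith [key, mul_nonneg hC2 (hfa0 ((k : ℤ) + 1 - M)),
      mul_nonneg hC4 (hfb0 ((k : ℤ) + 1 - M))]
  -- monotonicity
  have hmono : ∀ n : ℕ, V n ≤ V 0 := by
    intro n
    induction n with
    | zero => exact le_refl _
    | succ k ih => exact (hVstep k).trans ih
  intro n
  have h1 : Real.exp (ε * n * Δ) * a n ≤ V n := by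
    rw [hV]; simp only
    have t1 : Real.exp (ε * (n:ℝ) * Δ) * a n ≤ Real.exp (ε * (n:ℝ) * Δ) * F n :=
      mul_le_mul_of_nonneg_left (haF n) (Real.exp_pos _).le
    have t2 : Real.exp (ε * (n:ℝ) * Δ) * F n ≤ eΔ * Real.exp (ε * (n:ℝ) * Δ) * F n := by
      nlinarith [mul_nonneg (Real.exp_pos (ε * (n:ℝ) * Δ)).le (hF n), heΔ1]
    have t3 : (0:ℝ) ≤ 2 * c₂ * Δ * eτ * ∑ i ∈ Finset.Icc ((n : ℤ) - M + 1) (n : ℤ), fa i :=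
      mul_nonneg hC2 (Finset.sum_nonneg fun i _ => hfa0 i)
    have t4 : (0:ℝ) ≤ 2 * c₄ * Δ * eτ * ∑ i ∈ Finset.Icc ((n : ℤ) - M + 1) (n : ℤ), fb i :=
      mul_nonneg hC4 (Finset.sum_nonneg fun i _ => hfb0 i)
    linarith
  have h2 : V 0 = eΔ * F 0
      + 2 * c₂ * Δ * eτ * ∑ i ∈ Finset.Icc (-(M : ℤ) + 1) 0, fa i
      + 2 * c₄ * Δ * eτ * ∑ i ∈ Finset.Icc (-(M : ℤ) + 1) 0, fb i := by
    rw [hV]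
    norm_num
  calc Real.exp (ε * n * Δ) * a n ≤ V n := h1
    _ ≤ V 0 := hmono n
    _ = _ := h2
end

section
/- Define α(x,y) = x − 4x³ + y and β(x,y) = x² − y + 2 for x,y∈ℝ. Then for all x, x̄, y, ȳ ∈ ℝ: (x−x̄)(α(x,y)−α(x̄,ȳ)) + (β(x,y)−β(x̄,ȳ))² ≤ (3/2)(x−x̄)² + (5/2)(y−ȳ)². (Hence α and β satisfy Assumption A1 with q=3 and K=5/2.) -/
/-- The drift of Example 1: `α(x,y) = x − 4x³ + y`. -/
def exDrift (x y : ℝ) : ℝ := x - 4 * x ^ 3 + y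

/-- The diffusion of Example 1: `β(x,y) = x² − y + 2`. -/
def exDiffusion (x y : ℝ) : ℝ := x ^ 2 - y + 2

/-- Verification of Assumption A1 (with `q = 3`, `K = 5/2`) for Example 1. -/
theorem example1_assumption_A1 :
    ∀ x x' y y' : ℝ,
      (x - x') * (exDrift x y - exDrift x' y') + (exDiffusion x y - exDiffusion x' y') ^ 2
        ≤ 3 / 2 * (x - x') ^ 2 + 5 / 2 * (y - y') ^ 2 := by
  intro x x' y y'
  simp only [exDrift, exDiffusion]
  nlinarith [sq_nonneg (x - x'), sq_nonneg (y - y'), sq_nonneg (x + x'),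
    sq_nonneg ((x - x') * (x + x')), sq_nonneg (x^2 - x'^2),
    sq_nonneg (2 * (x - x') * (x + x') + (y - y')),
    sq_nonneg ((x - x') - (y - y')),
    sq_nonneg ((x - x') * (x - x'))]
end
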